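/- arXiv:2105.12431 — 2 statements merged into one kernel-verified Lean document; each statement's English description precedes it below -/
import Mathlib

section
/- Consider the two-dimensional ODE system S' = -r u(t) S φ(t), I' = r u(t) S φ(t) - α I on [0,T], where r, α ≥ 0 and u, φ: [0,T] → [0,1] are measurable. If (S(0), I(0)) ∈ [0,1]² with S(0) + I(0) ≤ 1, then (S(t), I(t)) ∈ [0,1]² and S(t) + I(t) ≤ 1 for all t ∈ [0,T]; moreover S is non-increasing and S(t) = S(0)·exp(-r ∫₀ᵗ u(s)φ(s) ds). -/
/-!
`S` solves the linear equation `S' = c S` with the merely measurable coefficient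
`c = -r u φ ∈ [-r, 0]`, so `t ↦ ∫ c` need not be differentiable and no integrating factor can be
differentiated. Instead: the equation is Lipschitz in the state, so by uniqueness a solution
vanishing at one time vanishes identically; otherwise it never vanishes, `log S` is differentiable
with derivative `c`, and the fundamental theorem of calculus gives the exponential formula, hence
`0 ≤ S ≤ S 0`. Then the inflow `r u S φ` into `I` is nonnegative, so `I e^{α t}` increases and
`I ≥ 0`, and finally `(S + I)' = -α I ≤ 0`.
-/

open intervalIntegral
open Set Real MeasureTheory
open scoped NNReal

section LinearODE

variable {a b : ℝ} {c y : ℝ → ℝ}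

theorem eqOn_zero_of_hasDerivAt_mul_self {K : ℝ≥0} (hc : ∀ t ∈ Icc a b, |c t| ≤ K)
    (hy : ∀ t ∈ Icc a b, HasDerivAt y (c t * y t) t) {t₀ : ℝ} (ht₀ : t₀ ∈ Icc a b)
    (hy₀ : y t₀ = 0) : EqOn y 0 (Icc a b) := by
  have hv : ∀ t ∈ Icc a b, LipschitzOnWith K (fun x => c t * x) univ := fun t ht =>
    ((lipschitzWith_smul (c t)).weaken <| by
      rw [← NNReal.coe_le_coe, coe_nnnorm, Real.norm_eq_abs]; exact hc t ht).lipschitzOnWith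
  have hy' := HasDerivAt.continuousOn hy
  have h0 : ∀ t, HasDerivAt (0 : ℝ → ℝ) (c t * (0 : ℝ → ℝ) t) t := fun t => by simp
  rw [← Icc_union_Icc_eq_Icc ht₀.1 ht₀.2]
  refine EqOn.union ?_ ?_
  · have hsub : Icc a t₀ ⊆ Icc a b := Icc_subset_Icc_right ht₀.2
    exact ODE_solution_unique_of_mem_Icc_left (fun t ht => hv t (hsub (Ioc_subset_Icc_self ht)))
      (hy'.mono hsub) (fun t ht => (hy t (hsub (Ioc_subset_Icc_self ht))).hasDerivWithinAt)
      (fun _ _ => trivial) continuousOn_const (fun t _ => (h0 t).hasDerivWithinAt)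
      (fun _ _ => trivial) hy₀
  · have hsub : Icc t₀ b ⊆ Icc a b := Icc_subset_Icc_left ht₀.1
    exact ODE_solution_unique_of_mem_Icc_right (fun t ht => hv t (hsub (Ico_subset_Icc_self ht)))
      (hy'.mono hsub) (fun t ht => (hy t (hsub (Ico_subset_Icc_self ht))).hasDerivWithinAt)
      (fun _ _ => trivial) continuousOn_const (fun t _ => (h0 t).hasDerivWithinAt)
      (fun _ _ => trivial) hy₀

theorem eq_mul_exp_integral_of_hasDerivAt_mul_self {K : ℝ≥0} (hc : ∀ t ∈ Icc a b, |c t| ≤ K)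
    (hci : IntervalIntegrable c volume a b) (hy : ∀ t ∈ Icc a b, HasDerivAt y (c t * y t) t)
    {t : ℝ} (ht : t ∈ Icc a b) : y t = y a * exp (∫ s in a..t, c s) := by
  have hya : a ∈ Icc a b := ⟨le_rfl, ht.1.trans ht.2⟩
  by_cases hy₀ : y a = 0
  · rw [eqOn_zero_of_hasDerivAt_mul_self hc hy hya hy₀ ht, hy₀, zero_mul, Pi.zero_apply]
  have hne : ∀ s ∈ Icc a b, y s ≠ 0 := fun s hs hys =>
    hy₀ (eqOn_zero_of_hasDerivAt_mul_self hc hy hs hys hya)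
  have hsub : uIcc a t ⊆ Icc a b := by
    rw [uIcc_of_le ht.1]; exact Icc_subset_Icc_right ht.2
  have hlog : ∫ s in a..t, c s = log (y t) - log (y a) := by
    refine integral_eq_sub_of_hasDerivAt (f := fun s => log (y s)) (fun s hs => ?_)
      (hci.mono_set (uIcc_subset_uIcc left_mem_uIcc (Icc_subset_uIcc ht)))
    simpa only [mul_div_cancel_right₀ _ (hne s (hsub hs))] using
      (hy s (hsub hs)).log (hne s (hsub hs))
  -- `y` cannot change sign on `[a, t]` without vanishing there
  have hsign : 0 < y t / y a := by
    by_contra! h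
    have h0 : (0 : ℝ) ∈ uIcc (y a) (y t) := by
      rcases div_nonpos_iff.mp h with ⟨h1, h2⟩ | ⟨h1, h2⟩
      · exact mem_uIcc.mpr (Or.inl ⟨h2, h1⟩)
      · exact mem_uIcc.mpr (Or.inr ⟨h1, h2⟩)
    obtain ⟨s, hs, hys⟩ := intermediate_value_uIcc ((HasDerivAt.continuousOn hy).mono hsub) h0
    exact hne s (hsub hs) hys
  rw [hlog, ← log_div (hne t ht) hy₀, exp_log hsign, mul_div_cancel₀ _ hy₀]

end LinearODE

section Monotonicity

variable {a b : ℝ} {f f' : ℝ → ℝ}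

theorem monotoneOn_Icc_of_hasDerivAt_nonneg (hf : ∀ t ∈ Icc a b, HasDerivAt f (f' t) t)
    (hf' : ∀ t ∈ Ioo a b, 0 ≤ f' t) : MonotoneOn f (Icc a b) :=
  monotoneOn_of_hasDerivWithinAt_nonneg (convex_Icc a b) (HasDerivAt.continuousOn hf)
    (fun t ht => (hf t (interior_subset ht)).hasDerivWithinAt)
    (fun t ht => hf' t (by rwa [interior_Icc] at ht))

theorem antitoneOn_Icc_of_hasDerivAt_nonpos (hf : ∀ t ∈ Icc a b, HasDerivAt f (f' t) t)
    (hf' : ∀ t ∈ Ioo a b, f' t ≤ 0) : AntitoneOn f (Icc a b) :=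
  antitoneOn_of_hasDerivWithinAt_nonpos (convex_Icc a b) (HasDerivAt.continuousOn hf)
    (fun t ht => (hf t (interior_subset ht)).hasDerivWithinAt)
    (fun t ht => hf' t (by rwa [interior_Icc] at ht))

end Monotonicity

theorem nonneg_of_hasDerivAt_sub_mul_self {a b α : ℝ} {g y : ℝ → ℝ}
    (hy : ∀ t ∈ Icc a b, HasDerivAt y (g t - α * y t) t) (hg : ∀ t ∈ Icc a b, 0 ≤ g t)
    (hya : 0 ≤ y a) {t : ℝ} (ht : t ∈ Icc a b) : 0 ≤ y t := by
  -- the integrating factor `exp (α t)` turns the equation into `(y e^{αt})' = g e^{αt} ≥ 0`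
  have hmono : MonotoneOn (fun t => y t * exp (α * t)) (Icc a b) :=
    monotoneOn_Icc_of_hasDerivAt_nonneg (f' := fun t => g t * exp (α * t))
      (fun t ht => ((hy t ht).fun_mul ((hasDerivAt_id' t).const_mul α).exp).congr_deriv (by ring))
      (fun t ht => mul_nonneg (hg t (Ioo_subset_Icc_self ht)) (exp_nonneg _))
  have := hmono ⟨le_rfl, ht.1.trans ht.2⟩ ht ht.1
  exact (mul_nonneg_iff_of_pos_right (exp_pos _)).mp ((mul_nonneg hya (exp_nonneg _)).trans this)

theorem Measurable.intervalIntegrable_of_abs_le {f : ℝ → ℝ} (hf : Measurable f) {C : ℝ}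
    (hC : ∀ t, |f t| ≤ C) (a b : ℝ) : IntervalIntegrable f volume a b :=
  IntervalIntegrable.mono_fun' (g := fun _ => C) intervalIntegrable_const hf.aestronglyMeasurable
    (ae_of_all _ hC)

theorem susceptible_eq_mul_exp {T r : ℝ} (hr : 0 ≤ r) {u φ S : ℝ → ℝ} (hu : Measurable u)
    (hφ : Measurable φ) (huφ : ∀ t, u t * φ t ∈ Icc (0 : ℝ) 1)
    (hS : ∀ t ∈ Icc 0 T, HasDerivAt S (-(r * u t * S t * φ t)) t) {t : ℝ} (ht : t ∈ Icc 0 T) :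
    S t = S 0 * exp (-(r * ∫ s in (0 : ℝ)..t, u s * φ s)) := by
  have hbound (s : ℝ) : |-(r * (u s * φ s))| ≤ r := by
    rw [abs_neg, abs_of_nonneg (mul_nonneg hr (huφ s).1)]
    exact mul_le_of_le_one_right hr (huφ s).2
  rw [← intervalIntegral.integral_const_mul, ← intervalIntegral.integral_neg]
  refine eq_mul_exp_integral_of_hasDerivAt_mul_self (K := r.toNNReal)
    (c := fun s => -(r * (u s * φ s))) (fun s _ => (coe_toNNReal r hr).symm ▸ hbound s)
    (((hu.mul hφ).const_mul r).neg.intervalIntegrable_of_abs_le hbound 0 T)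
    (fun s hs => (hS s hs).congr_deriv (by ring)) ht

theorem stmt_16_general (T r α : ℝ) (hr : 0 ≤ r) (hα : 0 ≤ α)
    (u φ S I : ℝ → ℝ)
    (hu : Measurable u) (hφ : Measurable φ)
    (huv : ∀ t, u t ∈ Set.Icc (0 : ℝ) 1) (hφv : ∀ t, φ t ∈ Set.Icc (0 : ℝ) 1)
    (hS : ∀ t ∈ Set.Icc 0 T, HasDerivAt S (-(r * u t * S t * φ t)) t)
    (hI : ∀ t ∈ Set.Icc 0 T, HasDerivAt I (r * u t * S t * φ t - α * I t) t)
    (hS0 : S 0 ∈ Set.Icc (0 : ℝ) 1) (hI0 : I 0 ∈ Set.Icc (0 : ℝ) 1)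
    (hsum0 : S 0 + I 0 ≤ 1) :
    (∀ t ∈ Set.Icc 0 T, S t ∈ Set.Icc (0 : ℝ) 1 ∧ I t ∈ Set.Icc (0 : ℝ) 1 ∧
        S t + I t ≤ 1 ∧
        S t = S 0 * Real.exp (-(r * ∫ s in (0 : ℝ)..t, u s * φ s))) ∧
    AntitoneOn S (Set.Icc 0 T) := by
  have huφ (t : ℝ) : u t * φ t ∈ Icc (0 : ℝ) 1 :=
    ⟨mul_nonneg (huv t).1 (hφv t).1, mul_le_one₀ (huv t).2 (hφv t).1 (hφv t).2⟩
  have hSform (t : ℝ) (ht : t ∈ Icc 0 T) := susceptible_eq_mul_exp hr hu hφ huφ hS ht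
  have hSnn (t : ℝ) (ht : t ∈ Icc 0 T) : 0 ≤ S t :=
    hSform t ht ▸ mul_nonneg hS0.1 (exp_nonneg _)
  have hSle (t : ℝ) (ht : t ∈ Icc 0 T) : S t ≤ S 0 := by
    rw [hSform t ht]
    refine mul_le_of_le_one_right hS0.1 (exp_le_one_iff.mpr (neg_nonpos.mpr (mul_nonneg hr ?_)))
    exact integral_nonneg ht.1 fun s _ => (huφ s).1
  have hinfect (t : ℝ) (ht : t ∈ Icc 0 T) : 0 ≤ r * u t * S t * φ t :=
    mul_nonneg (mul_nonneg (mul_nonneg hr (huv t).1) (hSnn t ht)) (hφv t).1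
  have hInn (t : ℝ) (ht : t ∈ Icc 0 T) : 0 ≤ I t :=
    nonneg_of_hasDerivAt_sub_mul_self hI hinfect hI0.1 ht
  have hSI : AntitoneOn (fun t => S t + I t) (Icc 0 T) :=
    antitoneOn_Icc_of_hasDerivAt_nonpos (f' := fun t => -(α * I t))
      (fun t ht => ((hS t ht).add (hI t ht)).congr_deriv (by ring))
      (fun t ht => neg_nonpos.mpr (mul_nonneg hα (hInn t (Ioo_subset_Icc_self ht))))
  refine ⟨fun t ht => ?_, antitoneOn_Icc_of_hasDerivAt_nonpos hS fun t ht =>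
    neg_nonpos.mpr (hinfect t (Ioo_subset_Icc_self ht))⟩
  have hsum := (hSI ⟨le_rfl, ht.1.trans ht.2⟩ ht ht.1).trans hsum0
  exact ⟨⟨hSnn t ht, (hSle t ht).trans hS0.2⟩, ⟨hInn t ht, by linarith [hSnn t ht]⟩, hsum,
    hSform t ht⟩

theorem stmt_16 (T r α : ℝ) (hT : 0 ≤ T) (hr : 0 ≤ r) (hα : 0 ≤ α)
    (u φ S I : ℝ → ℝ)
    (hu : Measurable u) (hφ : Measurable φ)
    (huv : ∀ t, u t ∈ Set.Icc (0 : ℝ) 1) (hφv : ∀ t, φ t ∈ Set.Icc (0 : ℝ) 1)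
    (hS : ∀ t ∈ Set.Icc 0 T, HasDerivAt S (-(r * u t * S t * φ t)) t)
    (hI : ∀ t ∈ Set.Icc 0 T, HasDerivAt I (r * u t * S t * φ t - α * I t) t)
    (hS0 : S 0 ∈ Set.Icc (0 : ℝ) 1) (hI0 : I 0 ∈ Set.Icc (0 : ℝ) 1)
    (hsum0 : S 0 + I 0 ≤ 1) :
    (∀ t ∈ Set.Icc 0 T, S t ∈ Set.Icc (0 : ℝ) 1 ∧ I t ∈ Set.Icc (0 : ℝ) 1 ∧
        S t + I t ≤ 1 ∧
        S t = S 0 * Real.exp (-(r * ∫ s in (0 : ℝ)..t, u s * φ s))) ∧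
    AntitoneOn S (Set.Icc 0 T) :=
  stmt_16_general T r α hr hα u φ S I hu hφ huv hφv hS hI hS0 hI0 hsum0
end

section
/- Let u*: minimize J(u) = -b·exp(-r ∑_k u_k I_k) - ∑_k u_k c_k over u ∈ [u_m,u_M]^N, where b, r > 0, I_k > 0. Then there exists λ' ∈ ℝ such that for every k: c_k/I_k ≤ λ' implies u*_k = u_m, and c_k/I_k > λ' implies u*_k = u_M. -/
theorem stmt_18 (N : ℕ) (b r um uM : ℝ) (hb : 0 < b) (hr : 0 < r)
    (h : um < uM) (I c : Fin N → ℝ) (hI : ∀ k, 0 < I k)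
    (J : (Fin N → ℝ) → ℝ)
    (hJ : ∀ u, J u = -b * Real.exp (-(r * ∑ k, u k * I k)) - ∑ k, u k * c k)
    (ustar : Fin N → ℝ) (hmem : ∀ k, ustar k ∈ Set.Icc um uM)
    (hopt : ∀ u : Fin N → ℝ, (∀ k, u k ∈ Set.Icc um uM) → J ustar ≤ J u) :
    ∃ lam : ℝ, ∀ k, (c k / I k ≤ lam → ustar k = um) ∧
      (lam < c k / I k → ustar k = uM) := by
  classical
  set S := ∑ k, ustar k * I k with hS
  set C := ∑ k, ustar k * c k with hC
  set E := Real.exp (-(r * S)) with hE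
  have hEpos : 0 < E := Real.exp_pos _
  refine ⟨b * r * E, fun k => ?_⟩
  have key : ∀ (g : Fin N → ℝ) (v : ℝ), (∑ j, Function.update ustar k v j * g j)
      = (∑ j, ustar j * g j) + (v - ustar k) * g k := by
    intro g v
    have h1 : ∀ j ∈ Finset.univ, Function.update ustar k v j * g j
        = Function.update (fun j => ustar j * g j) k (v * g k) j := by
      intro j _
      by_cases hj : j = k
      · subst hj; simp
      · simp [Function.update_of_ne hj]
    rw [Finset.sum_congr rfl h1, Finset.sum_update_of_mem (Finset.mem_univ k),
      Finset.sum_eq_sum_sdiff_singleton_add (Finset.mem_univ k) (fun j => ustar j * g j)]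
    ring
  have hmemu : ∀ v, v ∈ Set.Icc um uM → ∀ j, Function.update ustar k v j ∈ Set.Icc um uM := by
    intro v hv j
    by_cases hj : j = k
    · subst hj; simpa using hv
    · simpa [Function.update_of_ne hj] using hmem j
  have hJu : ∀ v, J (Function.update ustar k v)
      = -b * (E * Real.exp (-(r * ((v - ustar k) * I k)))) - (C + (v - ustar k) * c k) := by
    intro v
    rw [hJ, key I v, key c v, ← hS, ← hC, hE, ← Real.exp_add]
    have : -(r * (S + (v - ustar k) * I k)) = -(r * S) + -(r * ((v - ustar k) * I k)) := by ring
    rw [this]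
  have hJs : J ustar = -b * E - C := by rw [hJ]
  constructor
  · -- c k / I k ≤ lam → ustar k = um
    intro hc
    by_contra hne
    have h1 : um < ustar k := lt_of_le_of_ne (hmem k).1 (Ne.symm hne)
    have hle := hopt _ (hmemu um ⟨le_refl um, le_of_lt h⟩)
    rw [hJs, hJu um] at hle
    have hx : (0:ℝ) < r * ((ustar k - um) * I k) :=
      mul_pos hr (mul_pos (by linarith) (hI k))
    have heq : Real.exp (-(r * ((um - ustar k) * I k)))
        = Real.exp (r * ((ustar k - um) * I k)) := by congr 1; ring
    rw [heq] at hle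
    have hexp : 1 + r * ((ustar k - um) * I k) < Real.exp (r * ((ustar k - um) * I k)) := by
      have := Real.add_one_lt_exp (ne_of_gt hx); linarith
    have hck : c k ≤ b * r * E * I k := by
      have := (div_le_iff₀ (hI k)).mp hc
      linarith
    nlinarith [mul_lt_mul_of_pos_left hexp (mul_pos hb hEpos),
      mul_le_mul_of_nonneg_left hck (le_of_lt (show (0:ℝ) < ustar k - um by linarith))]
  · -- lam < c k / I k → ustar k = uM
    intro hc
    by_contra hne
    have h1 : ustar k < uM := lt_of_le_of_ne (hmem k).2 hne
    have hle := hopt _ (hmemu uM ⟨le_of_lt h, le_refl uM⟩)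
    rw [hJs, hJu uM] at hle
    have hexp : 1 - r * ((uM - ustar k) * I k) ≤ Real.exp (-(r * ((uM - ustar k) * I k))) := by
      have := Real.add_one_le_exp (-(r * ((uM - ustar k) * I k)))
      linarith
    have hck : b * r * E * I k < c k := by
      have := (lt_div_iff₀ (hI k)).mp hc
      linarith
    nlinarith [mul_le_mul_of_nonneg_left hexp (le_of_lt (mul_pos hb hEpos)),
      mul_lt_mul_of_pos_left hck (show (0:ℝ) < uM - ustar k by linarith)]
end
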